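/- Let φ₁ be the binary morphism with φ₁(0) = 01100100101101001011010010 and φ₁(1) = 0110101100110101100101001100101001, and let φ₂ be the binary morphism with φ₂(0) = 01001011010010110100100110 and φ₂(1) = 1001010011001010011010110011010110. Then φ₁ and φ₂ preserve cubefreeness: for every cubefree binary word w, both φ₁(w) and φ₂(w) are cubefree. -/

import Mathlib

/-- A cube is a word of the form XXX with X nonempty. -/
def IsCube {α : Type*} (w : List α) : Prop :=
  ∃ X : List α, X ≠ [] ∧ w = X ++ X ++ X

/-- A word contains a cube if some factor (contiguous subword) of it is a cube. -/
def HasCube {α : Type*} (w : List α) : Prop :=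
  ∃ u, u <:+: w ∧ IsCube u

/-- A word is cubefree if none of its factors is a cube. -/
def CubeFree {α : Type*} (w : List α) : Prop := ¬ HasCube w

/-- Apply the binary morphism determined by letter images `h` to a word. -/
def applyMorphism {α : Type*} (h : α → List α) (w : List α) : List α := w.flatMap h

/-- The binary morphism φ₁, given by its images of the letters 0 and 1. -/
def phi1 : Fin 2 → List (Fin 2) := fun a =>
  if a = 0 then [0,1,1,0,0,1,0,0,1,0,1,1,0,1,0,0,1,0,1,1,0,1,0,0,1,0]
  else [0,1,1,0,1,0,1,1,0,0,1,1,0,1,0,1,1,0,0,1,0,1,0,0,1,1,0,0,1,0,1,0,0,1]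

/-- The binary morphism φ₂, given by its images of the letters 0 and 1. -/
def phi2 : Fin 2 → List (Fin 2) := fun a =>
  if a = 0 then [0,1,0,0,1,0,1,1,0,1,0,0,1,0,1,1,0,1,0,0,1,0,0,1,1,0]
  else [1,0,0,1,0,1,0,0,1,1,0,0,1,0,1,0,0,1,1,0,1,0,1,1,0,0,1,1,0,1,0,1,1,0]

/-!
The image `φ₂ a` is the reversal of `φ₁ a`, so `φ₂ w` is the reversal of `φ₁ (reverse w)` and it
suffices to treat `φ₁`.

Let `XXX` be a cube in `φ₁ w`. When `X` is at least as long as both images, synchronization does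
the work: every occurrence of an image `φ₁ c` inside `φ₁ w` starts at a block boundary, above an
occurrence of `c` (a finite check on three-letter words). Shifting by `|X|` therefore sends the
blocks inside the first two copies of `X` to blocks with the same letters, so the letters of `w`
beneath them repeat with some period `d` over `2 d` letters, which is a cube in `w`. If the cube
starts inside a block, the last letters of `φ₁ 0` and `φ₁ 1` differ, and that handles the extra
letter. A shorter cube has length at most `99 ≤ 4 * 26 + 1`, so it lies in the image of a factor
of `w` of length at most five. For such words a direct computation shows that `φ₁` preserves
cubefreeness.
-/

open List

section Words

variable {α : Type*}

def factorAt (l : List α) (p L : ℕ) : List α := (l.drop p).take L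

lemma factorAt_infix (l : List α) (p L : ℕ) : factorAt l p L <:+: l :=
  (take_prefix _ _).isInfix.trans (drop_suffix p l).isInfix

lemma factorAt_drop (l : List α) (p r L : ℕ) : factorAt (l.drop p) r L = factorAt l (p + r) L := by
  rw [factorAt, factorAt, drop_drop]

lemma factorAt_append_of_le {l₁ : List α} (l₂ : List α) {p L : ℕ}
    (hL : p + L ≤ l₁.length) : factorAt (l₁ ++ l₂) p L = factorAt l₁ p L := by
  rw [factorAt, factorAt, drop_append_of_le_length (by omega),
    take_append_of_le_length (by rw [length_drop]; omega)]

lemma factorAt_append_append (pre u post : List α) :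
    factorAt (pre ++ u ++ post) pre.length u.length = u := by
  simp [factorAt]

lemma factorAt_congr {l : List α} {p p' L : ℕ} (h : ∀ i < L, l[p + i]? = l[p' + i]?) :
    factorAt l p L = factorAt l p' L := by
  apply ext_getElem?
  intro i
  simp only [factorAt, getElem?_take, getElem?_drop]
  split_ifs with hi
  · exact h i hi
  · rfl

lemma HasCube.mono {u w : List α} (huw : u <:+: w) : HasCube u → HasCube w :=
  fun ⟨v, hvu, hv⟩ => ⟨v, hvu.trans huw, hv⟩

lemma CubeFree.infix {u w : List α} (hw : CubeFree w) (huw : u <:+: w) : CubeFree u :=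
  fun hu => hw (hu.mono huw)

lemma CubeFree.reverse {w : List α} (hw : CubeFree w) : CubeFree w.reverse := by
  rintro ⟨_, hinf, X, hX, rfl⟩
  refine hw ⟨X.reverse ++ X.reverse ++ X.reverse, ?_, X.reverse, by simpa using hX, rfl⟩
  rw [← reverse_infix]
  simpa using hinf

lemma hasCube_of_drop_take_eq {l : List α} {d : ℕ} (hd : 0 < d) (hlen : 3 * d ≤ l.length)
    (hper : (l.drop d).take (2 * d) = l.take (2 * d)) : HasCube l := by
  have hX : (l.drop d).take d = l.take d := by
    have h := congrArg (take d) hper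
    rwa [take_take, take_take, min_eq_left (by omega)] at h
  refine ⟨l.take (3 * d), (take_prefix _ _).isInfix, l.take d, ?_, ?_⟩
  · rw [← length_pos_iff, length_take]; omega
  · rw [show 3 * d = d + 2 * d by ring, take_add, hper, show 2 * d = d + d by ring, take_add, hX,
      append_assoc]

lemma hasCube_of_getElem?_add_eq {w : List α} {s d : ℕ} (hd : 0 < d)
    (hlen : s + 2 * d ≤ w.length) (hper : ∀ i < 2 * d, w[s + i + d]? = w[s + i]?) :
    HasCube w := by
  have hlast : s + (2 * d - 1) + d < w.length := by
    have h : w[s + (2 * d - 1)]?.isSome := by rw [isSome_getElem?]; omega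
    rw [← hper (2 * d - 1) (by omega)] at h
    simpa using h
  refine (hasCube_of_drop_take_eq (l := w.drop s) hd (by rw [length_drop]; omega) ?_).mono
    (drop_suffix s w).isInfix
  apply ext_getElem?
  intro i
  simp only [getElem?_take, getElem?_drop]
  split_ifs with hi
  · rw [← hper i hi]; congr 1; omega
  · rfl

theorem hasCube_iff_exists_mem_tails (w : List α) :
    HasCube w ↔ ∃ t ∈ w.tails, ∃ n ∈ range (t.length / 3),
      (t.drop (n + 1)).take (2 * (n + 1)) = t.take (2 * (n + 1)) := by
  constructor
  · rintro ⟨_, hinf, X, hX, rfl⟩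
    obtain ⟨t, ⟨s, rfl⟩, hts⟩ := infix_iff_prefix_suffix.mp hinf
    have hXpos := length_pos_iff.mpr hX
    refine ⟨_, (mem_tails _ _).mpr hts, X.length - 1, mem_range.mpr ?_, ?_⟩
    · simp only [length_append]; omega
    · rw [Nat.sub_add_cancel hXpos]
      simp [two_mul, take_append, append_assoc]
  · rintro ⟨t, ht, n, hn, hper⟩
    rw [mem_range] at hn
    exact (hasCube_of_drop_take_eq n.succ_pos (by omega) hper).mono ((mem_tails _ _).mp ht).isInfix

lemma getElem?_add_length_of_eq_cube {l pre X post : List α}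
    (hl : l = pre ++ (X ++ X ++ X) ++ post) {x : ℕ} (h₁ : pre.length ≤ x)
    (h₂ : x < pre.length + 2 * X.length) : l[x + X.length]? = l[x]? := by
  subst hl
  simp only [append_assoc, getElem?_append]
  split_ifs <;> first | rfl | omega | (congr 1; omega)

lemma add_two_mul_length_lt_of_eq_cube {l pre X post : List α}
    (hl : l = pre ++ (X ++ X ++ X) ++ post) (hX : X ≠ []) :
    pre.length + 2 * X.length < l.length := by
  rw [hl]
  simp only [length_append]
  have := length_pos_iff.mpr hX
  omega

instance [DecidableEq α] : DecidablePred (HasCube (α := α)) := fun w =>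
  decidable_of_iff _ (hasCube_iff_exists_mem_tails w).symm

instance [DecidableEq α] : DecidablePred (CubeFree (α := α)) := fun _ => instDecidableNot

end Words

section Morphism

variable {α : Type*} (h : α → List α)

@[simp]
lemma applyMorphism_nil : applyMorphism h [] = [] := rfl

@[simp]
lemma applyMorphism_cons (a : α) (w : List α) :
    applyMorphism h (a :: w) = h a ++ applyMorphism h w :=
  flatMap_cons

@[simp]
lemma applyMorphism_append (u v : List α) :
    applyMorphism h (u ++ v) = applyMorphism h u ++ applyMorphism h v :=
  flatMap_append

lemma applyMorphism_reverse_comp (w : List α) :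
    applyMorphism (reverse ∘ h) w = (applyMorphism h w.reverse).reverse := by
  rw [applyMorphism, applyMorphism, reverse_flatMap, reverse_reverse]

lemma le_length_applyMorphism {m : ℕ} (hm : ∀ a, m ≤ (h a).length) (w : List α) :
    m * w.length ≤ (applyMorphism h w).length := by
  induction w with
  | nil => simp
  | cons a w ih => simp only [applyMorphism_cons, length_append, length_cons]; linarith [hm a]

def blockStart (w : List α) (j : ℕ) : ℕ := (applyMorphism h (w.take j)).length

variable {h} {w : List α}

@[simp]
lemma blockStart_zero : blockStart h w 0 = 0 := by simp [blockStart]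

lemma blockStart_mono : Monotone (blockStart h w) := by
  intro j k hjk
  rw [blockStart, blockStart, ← take_append_drop j (w.take k), take_take, min_eq_left hjk,
    applyMorphism_append, length_append]
  omega

lemma blockStart_succ {j : ℕ} {c : α} (hj : w[j]? = some c) :
    blockStart h w (j + 1) = blockStart h w j + (h c).length := by
  simp [blockStart, take_add_one, hj]

lemma blockStart_of_length_le {j : ℕ} (hj : w.length ≤ j) :
    blockStart h w j = (applyMorphism h w).length := by
  rw [blockStart, take_of_length_le hj]

lemma lt_length_of_blockStart_lt {j : ℕ} (hj : blockStart h w j < (applyMorphism h w).length) :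
    j < w.length := by
  by_contra hjw
  exact hj.ne (blockStart_of_length_le (not_lt.mp hjw))

lemma drop_blockStart (w : List α) (j : ℕ) :
    (applyMorphism h w).drop (blockStart h w j) = applyMorphism h (w.drop j) := by
  rw [blockStart, ← drop_left (l₁ := applyMorphism h (w.take j)) (l₂ := applyMorphism h (w.drop j)),
    ← applyMorphism_append, take_append_drop]

lemma blockStart_lt_succ (hne : ∀ a, h a ≠ []) {j : ℕ} (hj : j < w.length) :
    blockStart h w j < blockStart h w (j + 1) := by
  rw [blockStart_succ (getElem?_eq_getElem hj), Nat.lt_add_right_iff_pos, length_pos_iff]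
  exact hne _

lemma eq_of_blockStart_eq (hne : ∀ a, h a ≠ []) {j k : ℕ} (hj : j < w.length)
    (hjk : blockStart h w j = blockStart h w k) : j = k := by
  rcases lt_trichotomy j k with hlt | heq | hgt
  · exact absurd hjk ((blockStart_lt_succ hne hj).trans_le (blockStart_mono hlt)).ne
  · exact heq
  · exact absurd hjk ((blockStart_lt_succ hne (hgt.trans hj)).trans_le (blockStart_mono hgt)).ne'

lemma factorAt_applyMorphism_blockStart {j : ℕ} {c : α} (hj : w[j]? = some c) :
    factorAt (applyMorphism h w) (blockStart h w j) (h c).length = h c := by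
  obtain ⟨hjw, rfl⟩ := List.getElem?_eq_some_iff.mp hj
  rw [← add_zero (blockStart h w j), ← factorAt_drop, drop_blockStart, drop_eq_getElem_cons hjw,
    applyMorphism_cons, factorAt_append_of_le _ (by omega)]
  simp [factorAt]

lemma getElem?_applyMorphism_blockStart_add {j i : ℕ} {c : α} (hj : w[j]? = some c)
    (hi : i < (h c).length) : (applyMorphism h w)[blockStart h w j + i]? = (h c)[i]? := by
  obtain ⟨hjw, rfl⟩ := List.getElem?_eq_some_iff.mp hj
  rw [← getElem?_drop, drop_blockStart, drop_eq_getElem_cons hjw, applyMorphism_cons,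
    getElem?_append_left hi]

lemma exists_blockStart_le_lt {q : ℕ} (hq : q < (applyMorphism h w).length) :
    ∃ j < w.length, blockStart h w j ≤ q ∧ q < blockStart h w (j + 1) := by
  obtain ⟨n, hn⟩ : ∃ n, w.length = n + 1 :=
    Nat.exists_eq_succ_of_ne_zero fun h0 => by simp_all [length_eq_zero_iff]
  have hex : ∃ j, q < blockStart h w (j + 1) := ⟨n, by rwa [blockStart_of_length_le hn.le]⟩
  refine ⟨Nat.find hex, ?_, ?_, Nat.find_spec hex⟩
  · have := Nat.find_min' hex (show q < blockStart h w (n + 1) by rwa [blockStart_of_length_le hn.le])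
    omega
  · cases hj : Nat.find hex with
    | zero => rw [blockStart_zero]; omega
    | succ k => exact not_lt.mp (Nat.find_min hex (by omega))

end Morphism

section Window

variable {α : Type*} {h : α → List α} {m k : ℕ}

lemma factorAt_applyMorphism_eq_window (hm : ∀ a, m ≤ (h a).length) {w : List α} {j q L : ℕ}
    (hj : j < w.length) (hjq : blockStart h w j ≤ q) (hqj : q < blockStart h w (j + 1))
    (hL : L ≤ k * m + 1) :
    factorAt (applyMorphism h w) q L =
      factorAt (applyMorphism h (w[j] :: (w.drop (j + 1)).take k)) (q - blockStart h w j) L := by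
  have hsplit : w.drop j = (w[j] :: (w.drop (j + 1)).take k) ++ (w.drop (j + 1)).drop k := by
    rw [drop_eq_getElem_cons hj, cons_append, take_append_drop]
  have hr : q - blockStart h w j < (h w[j]).length := by
    rw [blockStart_succ (getElem?_eq_getElem hj)] at hqj; omega
  rw [show q = blockStart h w j + (q - blockStart h w j) by omega, ← factorAt_drop,
    drop_blockStart, hsplit, applyMorphism_append, Nat.add_sub_cancel_left]
  rcases eq_or_ne ((w.drop (j + 1)).drop k) [] with hrest | hrest
  · rw [hrest, applyMorphism_nil, append_nil]
  · have hk : ((w.drop (j + 1)).take k).length = k := by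
      rw [length_take, min_eq_left]
      by_contra hlt
      exact hrest (drop_eq_nil_of_le (by omega))
    have hlen := le_length_applyMorphism h hm ((w.drop (j + 1)).take k)
    rw [hk] at hlen
    apply factorAt_append_of_le
    simp only [applyMorphism_cons, length_append]
    linarith

lemma exists_infix_of_infix_applyMorphism (hm : ∀ a, m ≤ (h a).length) {u w : List α}
    (hu : u <:+: applyMorphism h w) (hL : u.length ≤ k * m + 1) :
    ∃ v, v <:+: w ∧ v.length ≤ k + 1 ∧ u <:+: applyMorphism h v := by
  rcases eq_or_ne u [] with rfl | hne
  · exact ⟨[], nil_infix, by simp, nil_infix⟩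
  obtain ⟨pre, post, hw⟩ := hu
  have hq : pre.length < (applyMorphism h w).length := by
    rw [← hw]; simp [length_pos_iff.mpr hne]
  obtain ⟨j, hj, hjq, hqj⟩ := exists_blockStart_le_lt hq
  refine ⟨w[j] :: (w.drop (j + 1)).take k, ?_, by simp, ?_⟩
  · rw [← take_succ_cons, ← drop_eq_getElem_cons hj]
    exact (take_prefix _ _).isInfix.trans (drop_suffix _ _).isInfix
  · rw [← factorAt_append_append pre u post, hw, factorAt_applyMorphism_eq_window hm hj hjq hqj hL]
    exact factorAt_infix _ _ _

variable (h) in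
def IsSynchronizing : Prop :=
  ∀ (w : List α) (c : α) (q : ℕ), factorAt (applyMorphism h w) q (h c).length = h c →
    ∃ j, w[j]? = some c ∧ blockStart h w j = q

lemma IsSynchronizing.ne_nil (hsync : IsSynchronizing h) (a : α) : h a ≠ [] := by
  intro ha
  obtain ⟨j, hj, -⟩ := hsync [] a 0 (by simp [ha, factorAt])
  simp at hj

theorem isSynchronizing_of_forall_cons (hm0 : 0 < m) (hm : ∀ a, m ≤ (h a).length)
    (hM : ∀ a, (h a).length ≤ k * m + 1)
    (hloc : ∀ (a c : α) (t : List α), t.length ≤ k → ∀ r < (h a).length,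
      factorAt (applyMorphism h (a :: t)) r (h c).length = h c → r = 0 ∧ a = c) :
    IsSynchronizing h := by
  intro w c q hocc
  have hq : q < (applyMorphism h w).length := by
    by_contra hq
    rw [factorAt, drop_eq_nil_of_le (not_lt.mp hq), take_nil] at hocc
    have := hm c
    rw [← hocc, length_nil] at this
    omega
  obtain ⟨j, hj, hjq, hqj⟩ := exists_blockStart_le_lt hq
  rw [factorAt_applyMorphism_eq_window hm hj hjq hqj (hM c)] at hocc
  have hr : q - blockStart h w j < (h w[j]).length := by
    rw [blockStart_succ (getElem?_eq_getElem hj)] at hqj; omega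
  obtain ⟨hr0, hjc⟩ := hloc _ c _ (length_take_le _ _) _ hr hocc
  exact ⟨j, by rw [getElem?_eq_getElem hj, hjc], by omega⟩

end Window

section LongCubes

variable {α : Type*} {h : α → List α} {w pre X post : List α}

lemma exists_blockStart_eq_add_of_cube (hsync : IsSynchronizing h)
    (hdec : applyMorphism h w = pre ++ (X ++ X ++ X) ++ post) {j : ℕ} {c : α}
    (hj : w[j]? = some c) (h₁ : pre.length ≤ blockStart h w j)
    (h₂ : blockStart h w (j + 1) ≤ pre.length + 2 * X.length) :
    ∃ j', w[j']? = some c ∧ blockStart h w j' = blockStart h w j + X.length := by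
  apply hsync w c
  conv_rhs => rw [← factorAt_applyMorphism_blockStart (h := h) hj]
  apply factorAt_congr
  intro i hi
  rw [blockStart_succ hj] at h₂
  rw [show blockStart h w j + X.length + i = blockStart h w j + i + X.length by omega]
  exact getElem?_add_length_of_eq_cube hdec (by omega) (by omega)

lemma blockStart_add_period_of_cube (hsync : IsSynchronizing h)
    (hdec : applyMorphism h w = pre ++ (X ++ X ++ X) ++ post) (hX : X ≠ []) {s d : ℕ}
    (hs : pre.length ≤ blockStart h w s)
    (hd : blockStart h w (s + d) = blockStart h w s + X.length) (k : ℕ)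
    (hk : blockStart h w (s + k) ≤ pre.length + 2 * X.length) :
    blockStart h w (s + k + d) = blockStart h w (s + k) + X.length ∧
      ∀ i < k, w[s + i + d]? = w[s + i]? := by
  induction k with
  | zero => exact ⟨hd, by simp⟩
  | succ k ih =>
    rw [← add_assoc] at hk
    have hkw : s + k + 1 < w.length :=
      lt_length_of_blockStart_lt (h := h) (hk.trans_lt (add_two_mul_length_lt_of_eq_cube hdec hX))
    obtain ⟨ihb, ihw⟩ := ih ((blockStart_mono (by omega)).trans hk)
    have hc : w[s + k]? = some w[s + k] := getElem?_eq_getElem (by omega)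
    obtain ⟨j', hj', hbj'⟩ :=
      exists_blockStart_eq_add_of_cube hsync hdec hc (hs.trans (blockStart_mono (by omega))) hk
    obtain rfl : j' = s + k + d :=
      eq_of_blockStart_eq hsync.ne_nil (List.getElem?_eq_some_iff.mp hj').1 (by rw [hbj', ihb])
    refine ⟨?_, fun i hi => ?_⟩
    · rw [← add_assoc, add_right_comm, blockStart_succ hj', blockStart_succ hc, hbj']
      ring
    · rcases (Nat.lt_succ_iff.mp hi).lt_or_eq with hi | rfl
      · exact ihw i hi
      · rw [hj', hc]

lemma exists_period_of_cube (hsync : IsSynchronizing h)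
    (hdec : applyMorphism h w = pre ++ (X ++ X ++ X) ++ post) (hX : X ≠ [])
    (hlong : ∀ a, (h a).length ≤ X.length) {s : ℕ} (hs : pre.length ≤ blockStart h w s)
    (hsX : blockStart h w s < pre.length + X.length) :
    ∃ d, 0 < d ∧ blockStart h w (s + d) = blockStart h w s + X.length := by
  have hlen := add_two_mul_length_lt_of_eq_cube hdec hX
  have hXpos := length_pos_iff.mpr hX
  have hsw : s < w.length := lt_length_of_blockStart_lt (h := h) (by omega)
  have hc : w[s]? = some w[s] := getElem?_eq_getElem hsw
  obtain ⟨j', -, hj'⟩ := exists_blockStart_eq_add_of_cube hsync hdec hc hs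
    (by rw [blockStart_succ hc]; linarith [hlong w[s]])
  have hsj : s < j' := by
    by_contra hle
    have := blockStart_mono (h := h) (w := w) (not_lt.mp hle)
    omega
  exact ⟨j' - s, by omega, by rwa [Nat.add_sub_cancel' hsj.le]⟩

lemma hasCube_of_cube_at_blockStart (hsync : IsSynchronizing h)
    (hdec : applyMorphism h w = pre ++ (X ++ X ++ X) ++ post) (hX : X ≠ [])
    (hlong : ∀ a, (h a).length ≤ X.length) {s : ℕ} (hs : blockStart h w s = pre.length) :
    HasCube w := by
  have hlen := add_two_mul_length_lt_of_eq_cube hdec hX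
  have hXpos := length_pos_iff.mpr hX
  obtain ⟨d, hd0, hd⟩ := exists_period_of_cube hsync hdec hX hlong hs.ge (by omega)
  have period := blockStart_add_period_of_cube hsync hdec hX hs.ge hd
  obtain ⟨h2d, -⟩ := period d (by omega)
  rw [add_assoc, ← two_mul, hd, hs] at h2d
  obtain ⟨-, hper⟩ := period (2 * d) (by omega)
  exact hasCube_of_getElem?_add_eq hd0 (lt_length_of_blockStart_lt (h := h) (by omega)).le hper

lemma hasCube_of_cube_inside_block (hsync : IsSynchronizing h)
    (hlast : Function.Injective fun a => (h a).getLast?)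
    (hdec : applyMorphism h w = pre ++ (X ++ X ++ X) ++ post) (hX : X ≠ [])
    (hlong : ∀ a, (h a).length ≤ X.length) {p : ℕ} (hp : blockStart h w p < pre.length)
    (hp' : pre.length < blockStart h w (p + 1)) : HasCube w := by
  have hlen := add_two_mul_length_lt_of_eq_cube hdec hX
  have hpw : p < w.length := by
    by_contra hpw
    have h₁ := blockStart_of_length_le (h := h) (w := w) (j := p) (by omega)
    have h₂ := blockStart_of_length_le (h := h) (w := w) (j := p + 1) (by omega)
    omega
  have hc : w[p]? = some w[p] := getElem?_eq_getElem hpw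
  have hsucc := blockStart_succ (h := h) hc
  have hpos : 0 < (h w[p]).length := length_pos_iff.mpr (hsync.ne_nil _)
  have hlongp := hlong w[p]
  obtain ⟨d, hd0, hd⟩ := exists_period_of_cube hsync hdec hX hlong hp'.le (by omega)
  have period := blockStart_add_period_of_cube hsync hdec hX hp'.le hd
  rw [add_right_comm] at hd
  have hpdw : p + d < w.length := by
    have := blockStart_mono (h := h) (w := w) (show p + d ≤ p + d + 1 by omega)
    exact lt_length_of_blockStart_lt (h := h) (by omega)
  have hc' : w[p + d]? = some w[p + d] := getElem?_eq_getElem hpdw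
  have hsucc' := blockStart_succ (h := h) hc'
  have hpos' : 0 < (h w[p + d]).length := length_pos_iff.mpr (hsync.ne_nil _)
  -- The last letter of block `p` lies in the cube; shifted by `X.length` it is the last letter
  -- of block `p + d`.
  have hab : w[p] = w[p + d] := by
    apply hlast
    simp only [getLast?_eq_getElem?]
    rw [← getElem?_applyMorphism_blockStart_add hc (Nat.sub_lt hpos one_pos),
      ← getElem?_applyMorphism_blockStart_add hc' (Nat.sub_lt hpos' one_pos),
      ← getElem?_add_length_of_eq_cube hdec (by omega) (by omega)]
    congr 1
    omega
  rw [← hab] at hsucc'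
  have hbpd : blockStart h w (p + d) = blockStart h w p + X.length := by omega
  obtain ⟨hbd, -⟩ := period (d - 1) (by
    rw [show p + 1 + (d - 1) = p + d by omega]; omega)
  rw [show p + 1 + (d - 1) = p + d by omega, hbpd] at hbd
  obtain ⟨-, hper⟩ := period (2 * d - 1) (by
    rw [show p + 1 + (2 * d - 1) = p + d + d by omega]; omega)
  refine hasCube_of_getElem?_add_eq (s := p) hd0 ?_ fun i hi => ?_
  · have := lt_length_of_blockStart_lt (h := h) (w := w) (j := p + d + d) (by omega)
    omega
  · rcases i with _ | i
    · simp only [add_zero, hc, hc', hab]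
    · rw [show p + (i + 1) = p + 1 + i by omega]
      exact hper i (by omega)

theorem hasCube_of_applyMorphism_eq_cube (hsync : IsSynchronizing h)
    (hlast : Function.Injective fun a => (h a).getLast?)
    (hdec : applyMorphism h w = pre ++ (X ++ X ++ X) ++ post) (hX : X ≠ [])
    (hlong : ∀ a, (h a).length ≤ X.length) : HasCube w := by
  have hP : pre.length < (applyMorphism h w).length := by
    rw [hdec]; simp [length_pos_iff.mpr hX]
  obtain ⟨j, -, hjP, hPj⟩ := exists_blockStart_le_lt hP
  rcases hjP.eq_or_lt with heq | hlt
  · exact hasCube_of_cube_at_blockStart hsync hdec hX hlong heq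
  · exact hasCube_of_cube_inside_block hsync hlast hdec hX hlong hlt hPj

end LongCubes

lemma mem_sections_replicate {α : Type*} {l : List α} (hl : ∀ a, a ∈ l) (t : List α) :
    t ∈ (replicate t.length l).sections := by
  rw [mem_sections]
  induction t with
  | nil => exact Forall₂.nil
  | cons a t ih => exact Forall₂.cons (hl a) ih

lemma phi1_length (a : Fin 2) : 26 ≤ (phi1 a).length ∧ (phi1 a).length ≤ 34 := by
  fin_cases a <;> decide

lemma phi1_getLast?_injective : Function.Injective fun a => (phi1 a).getLast? := by
  decide

theorem phi1_isSynchronizing : IsSynchronizing phi1 := by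
  have hcheck : ∀ n < 3, ∀ t ∈ (replicate n (finRange 2)).sections, ∀ a c : Fin 2,
      ∀ r < (phi1 a).length,
        factorAt (applyMorphism phi1 (a :: t)) r (phi1 c).length = phi1 c → r = 0 ∧ a = c := by
    decide +kernel
  refine isSynchronizing_of_forall_cons (m := 26) (k := 2) (by norm_num)
    (fun a => (phi1_length a).1) (fun a => by linarith [(phi1_length a).2]) fun a c t ht =>
      hcheck t.length (by omega) t (mem_sections_replicate mem_finRange t) a c

lemma CubeFree.applyMorphism_phi1_of_length_le {v : List (Fin 2)} (hv : v.length ≤ 5)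
    (hcf : CubeFree v) : CubeFree (applyMorphism phi1 v) := by
  have hcheck : ∀ n < 6, ∀ v ∈ (replicate n (finRange 2)).sections,
      CubeFree v → CubeFree (applyMorphism phi1 v) := by
    decide +kernel
  exact hcheck v.length (by omega) v (mem_sections_replicate mem_finRange v) hcf

theorem CubeFree.applyMorphism_phi1 {w : List (Fin 2)} (hw : CubeFree w) :
    CubeFree (applyMorphism phi1 w) := by
  rintro ⟨_, hinf, X, hX, rfl⟩
  by_cases hlong : ∀ a, (phi1 a).length ≤ X.length
  · obtain ⟨pre, post, hdec⟩ := hinf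
    exact hw (hasCube_of_applyMorphism_eq_cube phi1_isSynchronizing phi1_getLast?_injective
      hdec.symm hX hlong)
  · obtain ⟨a, ha⟩ := not_forall.mp hlong
    rw [not_le] at ha
    obtain ⟨v, hvw, hv, hXv⟩ := exists_infix_of_infix_applyMorphism (k := 4)
      (fun a => (phi1_length a).1) hinf (by simp only [length_append]; linarith [(phi1_length a).2])
    exact (hw.infix hvw).applyMorphism_phi1_of_length_le hv ⟨_, hXv, X, hX, rfl⟩

theorem phi1_phi2_preserve_cubefreeness (w : List (Fin 2)) (hw : CubeFree w) :
    CubeFree (applyMorphism phi1 w) ∧ CubeFree (applyMorphism phi2 w) := by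
  have hphi2 : phi2 = reverse ∘ phi1 := funext (by decide)
  refine ⟨hw.applyMorphism_phi1, ?_⟩
  rw [hphi2, applyMorphism_reverse_comp]
  exact hw.reverse.applyMorphism_phi1.reverse
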